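/- Isometry property of the CDT: for probability densities p, q on ℝ with finite second moments and a reference density s₀, one has d_{W²}²(p, q) = ∫ |C(p)(x) − C(q)(x)|² s₀(x) dx, where C(p) = F_p† ∘ F_{s₀}. -/

import Mathlib

/-!
The quantile function `Q = F†` of a distribution pushes the uniform measure on `(0, 1)` forward
to that distribution, and since `F_{s₀}` is continuous it pushes `s₀` forward to the uniform
measure. Hence the right-hand side equals `∫₀¹ (Q_p - Q_q)²`, the cost of the comonotone coupling
`u ↦ (Q_p u, Q_q u)`. This coupling is optimal: the cost of a coupling `π` is the sum of the second
moments minus `2 ∫ x y dπ`, and Hoeffding's identity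
`x y = ∫∫ (𝟙[s < x] - 𝟙[s < 0]) (𝟙[t < y] - 𝟙[t < 0]) ds dt` shows that, for fixed marginals,
`∫ x y dπ` increases with the joint tails `π ((s, ∞) × (t, ∞))`. The comonotone coupling attains
the Fréchet bound `min (P (X > s)) (P (Y > t))` for every one of them.
-/

open MeasureTheory
open scoped Classical

/-- Cumulation of a signal: `F_s(x) = ∫_{-∞}^x s(t) dt`. -/
noncomputable def cum (s : ℝ → ℝ) (x : ℝ) : ℝ := ∫ t in Set.Iic x, s t

/-- Real-valued generalized inverse `F†(y) = inf {x : F x > y}`. -/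
noncomputable def genInvR (F : ℝ → ℝ) (y : ℝ) : ℝ := sInf {x : ℝ | F x > y}

/-- The CDT of a density `s` with respect to a reference density `s₀`:
`C(s) = F_s† ∘ F_{s₀}`. -/
noncomputable def cdt (s₀ s : ℝ → ℝ) : ℝ → ℝ := fun x => genInvR (cum s) (cum s₀ x)

/-- Pointwise positive part `f⁺(x) = max {f x, 0}`. -/
def pPart (f : ℝ → ℝ) : ℝ → ℝ := fun x => max (f x) 0

/-- Pointwise negative part `f⁻(x) = max {-f x, 0}`. -/
def nPart (f : ℝ → ℝ) : ℝ → ℝ := fun x => max (-(f x)) 0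

/-- `L¹` norm `‖f‖₁ = ∫ |f|`. -/
noncomputable def l1 (f : ℝ → ℝ) : ℝ := ∫ x, |f x|

/-- The warped signal `s_g(x) = g'(x) · s(g(x))`. -/
noncomputable def warp (g s : ℝ → ℝ) : ℝ → ℝ := fun x => deriv g x * s (g x)

/-- First SCDT component `(s⁺)★ = C(s⁺/‖s⁺‖₁)` (and `0` if `s⁺` is trivial). -/
noncomputable def scdtPos (s₀ s : ℝ → ℝ) : ℝ → ℝ :=
  if pPart s = 0 then 0 else cdt s₀ (fun x => pPart s x / l1 (pPart s))

/-- Third SCDT component `(s⁻)★ = C(s⁻/‖s⁻‖₁)` (and `0` if `s⁻` is trivial). -/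
noncomputable def scdtNeg (s₀ s : ℝ → ℝ) : ℝ → ℝ :=
  if nPart s = 0 then 0 else cdt s₀ (fun x => nPart s x / l1 (nPart s))

/-- The measure on `ℝ` with density `p` w.r.t. Lebesgue measure. -/
noncomputable def densMeasure (p : ℝ → ℝ) : Measure ℝ :=
  volume.withDensity (fun x => ENNReal.ofReal (p x))

/-- Squared 2-Wasserstein distance, as the infimum of the quadratic transport
cost over all couplings. -/
noncomputable def w2sq (μ ν : Measure ℝ) : ℝ :=
  sInf {c : ℝ | ∃ π : Measure (ℝ × ℝ),
    π.map Prod.fst = μ ∧ π.map Prod.snd = ν ∧ c = ∫ p, (p.1 - p.2) ^ 2 ∂π}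

open ProbabilityTheory Set Filter Topology

section Quantile

/-- Meaningful only for `u ∈ (0, 1)`; elsewhere `sInf` returns a junk value. -/
noncomputable def quantile (μ : Measure ℝ) : ℝ → ℝ := genInvR (cdf μ)

variable (μ : Measure ℝ) {u x : ℝ}

lemma bddBelow_setOf_lt_cdf (hu : 0 < u) : BddBelow {x | u < cdf μ x} := by
  obtain ⟨x₀, hx₀⟩ := ((tendsto_cdf_atBot μ).eventually_lt_const hu).exists
  refine ⟨x₀, fun y hy => ?_⟩
  by_contra! hyx
  exact (hy.trans_le (monotone_cdf μ hyx.le)).not_gt hx₀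

lemma nonempty_setOf_lt_cdf (hu : u < 1) : {x | u < cdf μ x}.Nonempty :=
  ((tendsto_cdf_atTop μ).eventually_const_lt hu).exists

lemma quantile_le_of_lt_cdf (hu : 0 < u) (h : u < cdf μ x) : quantile μ u ≤ x :=
  csInf_le (bddBelow_setOf_lt_cdf μ hu) h

lemma le_cdf_of_quantile_le (hu : u < 1) (h : quantile μ u ≤ x) : u ≤ cdf μ x := by
  have hright : Tendsto (cdf μ) (𝓝[>] x) (𝓝 (cdf μ x)) :=
    ((cdf μ).right_continuous x).mono Ioi_subset_Ici_self
  refine ge_of_tendsto hright (eventually_nhdsWithin_of_forall fun y (hy : x < y) => ?_)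
  obtain ⟨z, hz, hzy⟩ := exists_lt_of_csInf_lt (nonempty_setOf_lt_cdf μ hu) (h.trans_lt hy)
  exact hz.le.trans (monotone_cdf μ hzy.le)

lemma lt_quantile_of_cdf_lt (hu : u < 1) (h : cdf μ x < u) : x < quantile μ u :=
  not_le.1 fun hle => (le_cdf_of_quantile_le μ hu hle).not_gt h

lemma monotoneOn_quantile : MonotoneOn (quantile μ) (Ioo 0 1) := fun _ hu _ hv huv =>
  csInf_le_csInf (bddBelow_setOf_lt_cdf μ hu.1) (nonempty_setOf_lt_cdf μ hv.2)
    fun _ hx => huv.trans_lt hx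

lemma aemeasurable_quantile : AEMeasurable (quantile μ) (volume.restrict (Ioo 0 1)) :=
  aemeasurable_restrict_of_monotoneOn measurableSet_Ioo (monotoneOn_quantile μ)

lemma map_quantile [IsProbabilityMeasure μ] : (volume.restrict (Ioo 0 1)).map (quantile μ) = μ := by
  refine Measure.ext_of_Iic _ _ fun x => ?_
  rw [Measure.map_apply_of_aemeasurable (aemeasurable_quantile μ) measurableSet_Iic,
    Measure.restrict_apply' measurableSet_Ioo, ← ofReal_cdf]
  apply le_antisymm
  · calc volume (quantile μ ⁻¹' Iic x ∩ Ioo 0 1) ≤ volume (Ioc 0 (cdf μ x)) :=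
          measure_mono fun u ⟨hux, hu⟩ => ⟨hu.1, le_cdf_of_quantile_le μ hu.2 hux⟩
      _ = ENNReal.ofReal (cdf μ x) := by rw [Real.volume_Ioc, sub_zero]
  · calc ENNReal.ofReal (cdf μ x) = volume (Ioo 0 (cdf μ x)) := by rw [Real.volume_Ioo, sub_zero]
      _ ≤ volume (quantile μ ⁻¹' Iic x ∩ Ioo 0 1) :=
          measure_mono fun u ⟨hu0, hux⟩ =>
            ⟨quantile_le_of_lt_cdf μ hu0 hux, hu0, hux.trans_le (cdf_le_one μ x)⟩

lemma cdf_quantile (hc : Continuous (cdf μ)) (hu : u ∈ Ioo 0 1) : cdf μ (quantile μ u) = u := by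
  refine le_antisymm ?_ (le_cdf_of_quantile_le μ hu.2 le_rfl)
  have hleft : Tendsto (cdf μ) (𝓝[<] quantile μ u) (𝓝 (cdf μ (quantile μ u))) :=
    hc.continuousAt.tendsto.mono_left nhdsWithin_le_nhds
  exact le_of_tendsto hleft (eventually_nhdsWithin_of_forall fun y (hy : y < quantile μ u) =>
    not_lt.1 fun h => (quantile_le_of_lt_cdf μ hu.1 h).not_gt hy)

lemma map_cdf [IsProbabilityMeasure μ] (hc : Continuous (cdf μ)) :
    μ.map (cdf μ) = volume.restrict (Ioo 0 1) := by
  have hid : cdf μ ∘ quantile μ =ᵐ[volume.restrict (Ioo 0 1)] id := by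
    filter_upwards [ae_restrict_mem measurableSet_Ioo] with u hu
    exact cdf_quantile μ hc hu
  calc μ.map (cdf μ) = ((volume.restrict (Ioo 0 1)).map (quantile μ)).map (cdf μ) := by
        rw [map_quantile]
    _ = volume.restrict (Ioo 0 1) := by
        rw [AEMeasurable.map_map_of_aemeasurable hc.measurable.aemeasurable
          (aemeasurable_quantile μ), Measure.map_congr hid, Measure.map_id]

lemma integral_comp_cdf [IsProbabilityMeasure μ] (hc : Continuous (cdf μ)) {g : ℝ → ℝ}
    (hg : AEStronglyMeasurable g (volume.restrict (Ioo 0 1))) :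
    ∫ x, g (cdf μ x) ∂μ = ∫ u in Ioo 0 1, g u := by
  rw [← map_cdf μ hc] at hg ⊢
  exact (integral_map hc.measurable.aemeasurable hg).symm

end Quantile

section Density

variable {f : ℝ → ℝ}

lemma densMeasure_apply (hf : Integrable f) (h0 : ∀ x, 0 ≤ f x) {s : Set ℝ}
    (hs : MeasurableSet s) : densMeasure f s = ENNReal.ofReal (∫ x in s, f x) := by
  rw [densMeasure, withDensity_apply _ hs,
    ofReal_integral_eq_lintegral_ofReal hf.integrableOn (Eventually.of_forall h0)]

lemma isProbabilityMeasure_densMeasure (hf : Integrable f) (h0 : ∀ x, 0 ≤ f x)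
    (h1 : ∫ x, f x = 1) : IsProbabilityMeasure (densMeasure f) :=
  ⟨by rw [densMeasure_apply hf h0 MeasurableSet.univ, Measure.restrict_univ, h1,
    ENNReal.ofReal_one]⟩

lemma cum_eq_cdf (hf : Integrable f) (h0 : ∀ x, 0 ≤ f x) (h1 : ∫ x, f x = 1) :
    cum f = cdf (densMeasure f) := by
  have := isProbabilityMeasure_densMeasure hf h0 h1
  funext x
  rw [cdf_eq_real, measureReal_def, densMeasure_apply hf h0 measurableSet_Iic,
    ENNReal.toReal_ofReal (setIntegral_nonneg measurableSet_Iic fun y _ => h0 y), cum]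

lemma continuous_cum (hf : Integrable f) : Continuous (cum f) := by
  have hcum : cum f = fun x => cum f 0 + ∫ t in (0 : ℝ)..x, f t := by
    funext x
    have h := intervalIntegral.integral_Iic_sub_Iic hf.integrableOn hf.integrableOn
      (a := 0) (b := x)
    rw [cum, cum, ← h]
    ring
  rw [hcum]
  exact continuous_const.add (hf.continuous_primitive 0)

lemma integral_densMeasure (hf : AEMeasurable f) (h0 : ∀ x, 0 ≤ f x) (g : ℝ → ℝ) :
    ∫ x, g x ∂densMeasure f = ∫ x, g x * f x := by
  rw [densMeasure, integral_withDensity_eq_integral_toReal_smul₀ hf.ennreal_ofReal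
    (Eventually.of_forall fun _ => ENNReal.ofReal_lt_top)]
  simp only [ENNReal.toReal_ofReal (h0 _), smul_eq_mul, mul_comm]

lemma integrable_densMeasure_iff (hf : AEMeasurable f) (h0 : ∀ x, 0 ≤ f x) {g : ℝ → ℝ} :
    Integrable g (densMeasure f) ↔ Integrable fun x => g x * f x := by
  rw [densMeasure, integrable_withDensity_iff_integrable_smul₀' hf.ennreal_ofReal
    (Eventually.of_forall fun _ => ENNReal.ofReal_lt_top)]
  simp only [ENNReal.toReal_ofReal (h0 _), smul_eq_mul, mul_comm]

end Density

section Hoeffding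

noncomputable def hoeffdingKernel (s x : ℝ) : ℝ :=
  (if s < x then 1 else 0) - (if s < 0 then 1 else 0)

@[fun_prop]
lemma Measurable.hoeffdingKernel {α : Type*} [MeasurableSpace α] {f g : α → ℝ}
    (hf : Measurable f) (hg : Measurable g) : Measurable fun a => hoeffdingKernel (f a) (g a) :=
  (Measurable.ite (measurableSet_lt hf hg) measurable_const measurable_const).sub
    (Measurable.ite (measurableSet_lt hf measurable_const) measurable_const measurable_const)

lemma hoeffdingKernel_eq_indicator_sub (s x : ℝ) :
    hoeffdingKernel s x = (Ico 0 x).indicator 1 s - (Ico x 0).indicator 1 s := by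
  simp only [hoeffdingKernel, indicator, mem_Ico, Pi.one_apply]
  split_ifs <;> grind

lemma abs_hoeffdingKernel (s x : ℝ) :
    |hoeffdingKernel s x| = (Ico 0 x).indicator 1 s + (Ico x 0).indicator 1 s := by
  simp only [hoeffdingKernel, indicator, mem_Ico, Pi.one_apply]
  split_ifs <;> grind

lemma integrable_hoeffdingKernel (x : ℝ) : Integrable fun s => hoeffdingKernel s x := by
  simp only [hoeffdingKernel_eq_indicator_sub]
  exact (integrableOn_const measure_Ico_lt_top.ne).integrable_indicator measurableSet_Ico |>.sub
    ((integrableOn_const measure_Ico_lt_top.ne).integrable_indicator measurableSet_Ico)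

lemma integral_hoeffdingKernel (x : ℝ) : ∫ s, hoeffdingKernel s x = x := by
  simp only [hoeffdingKernel_eq_indicator_sub]
  rw [integral_sub, integral_indicator_one measurableSet_Ico,
    integral_indicator_one measurableSet_Ico, Real.volume_real_Ico, Real.volume_real_Ico]
  · simp [max_zero_sub_max_neg_zero_eq_self]
  all_goals exact (integrableOn_const measure_Ico_lt_top.ne).integrable_indicator measurableSet_Ico

lemma integral_abs_hoeffdingKernel (x : ℝ) : ∫ s, |hoeffdingKernel s x| = |x| := by
  simp only [abs_hoeffdingKernel]
  rw [integral_add, integral_indicator_one measurableSet_Ico,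
    integral_indicator_one measurableSet_Ico, Real.volume_real_Ico, Real.volume_real_Ico]
  · simp [max_zero_add_max_neg_zero_eq_abs_self]
  all_goals exact (integrableOn_const measure_Ico_lt_top.ne).integrable_indicator measurableSet_Ico

variable {π : Measure (ℝ × ℝ)}

lemma integrable_hoeffdingKernel_mul_prod [SFinite π] (h : Integrable (fun z => z.1 * z.2) π) :
    Integrable (fun w : (ℝ × ℝ) × ℝ × ℝ =>
      hoeffdingKernel w.2.1 w.1.1 * hoeffdingKernel w.2.2 w.1.2) (π.prod volume) := by
  have hmeas : Measurable fun w : (ℝ × ℝ) × ℝ × ℝ =>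
      hoeffdingKernel w.2.1 w.1.1 * hoeffdingKernel w.2.2 w.1.2 := by
    fun_prop
  rw [integrable_prod_iff hmeas.aestronglyMeasurable, Measure.volume_eq_prod]
  refine ⟨Eventually.of_forall fun z =>
    (integrable_hoeffdingKernel z.1).mul_prod (integrable_hoeffdingKernel z.2), ?_⟩
  refine h.abs.congr (Eventually.of_forall fun z => ?_)
  simp only [norm_mul, Real.norm_eq_abs]
  rw [integral_prod_mul (fun s => |hoeffdingKernel s z.1|) (fun t => |hoeffdingKernel t z.2|),
    integral_abs_hoeffdingKernel, integral_abs_hoeffdingKernel, abs_mul]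

lemma integral_mul_eq_integral_integral_hoeffdingKernel [SFinite π]
    (h : Integrable (fun z => z.1 * z.2) π) :
    ∫ z, z.1 * z.2 ∂π =
      ∫ st : ℝ × ℝ, ∫ z, hoeffdingKernel st.1 z.1 * hoeffdingKernel st.2 z.2 ∂π := by
  have hinner (z : ℝ × ℝ) :
      ∫ st : ℝ × ℝ, hoeffdingKernel st.1 z.1 * hoeffdingKernel st.2 z.2 = z.1 * z.2 := by
    rw [Measure.volume_eq_prod, integral_prod_mul (fun s => hoeffdingKernel s z.1)
      (fun t => hoeffdingKernel t z.2), integral_hoeffdingKernel, integral_hoeffdingKernel]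
  simp_rw [← hinner]
  exact integral_integral_swap (integrable_hoeffdingKernel_mul_prod h)

lemma integral_hoeffdingKernel_mul [IsFiniteMeasure π] (s t : ℝ) :
    ∫ z, hoeffdingKernel s z.1 * hoeffdingKernel t z.2 ∂π =
      π.real (Ioi s ×ˢ Ioi t) - (if s < 0 then 1 else 0) * (π.map Prod.snd).real (Ioi t)
        - (if t < 0 then 1 else 0) * (π.map Prod.fst).real (Ioi s)
        + (if s < 0 then 1 else 0) * (if t < 0 then 1 else 0) * (π.map Prod.fst).real univ := by
  set a : ℝ := if s < 0 then 1 else 0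
  set b : ℝ := if t < 0 then 1 else 0
  have hE : MeasurableSet (Ioi s ×ˢ Ioi t) := measurableSet_Ioi.prod measurableSet_Ioi
  have hE₁ : MeasurableSet (Prod.fst ⁻¹' Ioi s : Set (ℝ × ℝ)) := measurable_fst measurableSet_Ioi
  have hE₂ : MeasurableSet (Prod.snd ⁻¹' Ioi t : Set (ℝ × ℝ)) := measurable_snd measurableSet_Ioi
  have hexpand : (fun z : ℝ × ℝ => hoeffdingKernel s z.1 * hoeffdingKernel t z.2) =
      fun z => (Ioi s ×ˢ Ioi t).indicator 1 z - a * (Prod.snd ⁻¹' Ioi t).indicator 1 z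
        - b * (Prod.fst ⁻¹' Ioi s).indicator 1 z + a * b := by
    funext z
    simp only [hoeffdingKernel, a, b, indicator, mem_prod, mem_preimage, mem_Ioi, Pi.one_apply]
    split_ifs <;> grind
  have hi : Integrable (fun z => (Ioi s ×ˢ Ioi t).indicator (1 : ℝ × ℝ → ℝ) z) π :=
    (integrable_const (1 : ℝ)).indicator hE
  have hi₁ : Integrable (fun z => (Prod.fst ⁻¹' Ioi s).indicator (1 : ℝ × ℝ → ℝ) z) π :=
    (integrable_const (1 : ℝ)).indicator hE₁
  have hi₂ : Integrable (fun z => (Prod.snd ⁻¹' Ioi t).indicator (1 : ℝ × ℝ → ℝ) z) π :=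
    (integrable_const (1 : ℝ)).indicator hE₂
  rw [hexpand, integral_add, integral_sub, integral_sub, integral_const_mul, integral_const_mul,
    integral_indicator_one hE, integral_indicator_one hE₁, integral_indicator_one hE₂,
    integral_const, map_measureReal_apply measurable_fst measurableSet_Ioi,
    map_measureReal_apply measurable_snd measurableSet_Ioi,
    map_measureReal_apply measurable_fst MeasurableSet.univ, preimage_univ, smul_eq_mul]
  · ring
  all_goals fun_prop

lemma integral_mul_le_of_measure_Ioi_prod_le {π' : Measure (ℝ × ℝ)} [IsFiniteMeasure π]
    [IsFiniteMeasure π'] (hfst : π.map Prod.fst = π'.map Prod.fst)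
    (hsnd : π.map Prod.snd = π'.map Prod.snd) (hπ : Integrable (fun z => z.1 * z.2) π)
    (hπ' : Integrable (fun z => z.1 * z.2) π')
    (hle : ∀ s t, π (Ioi s ×ˢ Ioi t) ≤ π' (Ioi s ×ˢ Ioi t)) :
    ∫ z, z.1 * z.2 ∂π ≤ ∫ z, z.1 * z.2 ∂π' := by
  rw [integral_mul_eq_integral_integral_hoeffdingKernel hπ,
    integral_mul_eq_integral_integral_hoeffdingKernel hπ']
  refine integral_mono (integrable_hoeffdingKernel_mul_prod hπ).integral_prod_right
    (integrable_hoeffdingKernel_mul_prod hπ').integral_prod_right fun st => ?_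
  have hreal : π.real (Ioi st.1 ×ˢ Ioi st.2) ≤ π'.real (Ioi st.1 ×ˢ Ioi st.2) :=
    ENNReal.toReal_mono (measure_ne_top _ _) (hle st.1 st.2)
  simp only [integral_hoeffdingKernel_mul, hfst, hsnd]
  linarith

end Hoeffding

section Wasserstein

noncomputable def comonotoneCoupling (μ ν : Measure ℝ) : Measure (ℝ × ℝ) :=
  (volume.restrict (Ioo 0 1)).map fun u => (quantile μ u, quantile ν u)

lemma integrable_fst_mul_snd {π : Measure (ℝ × ℝ)}
    (h₁ : Integrable (fun x => x ^ 2) (π.map Prod.fst))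
    (h₂ : Integrable (fun x => x ^ 2) (π.map Prod.snd)) :
    Integrable (fun z : ℝ × ℝ => z.1 * z.2) π := by
  have hx : MemLp Prod.fst 2 π := (memLp_two_iff_integrable_sq
    measurable_fst.aestronglyMeasurable).2 (h₁.comp_measurable measurable_fst)
  have hy : MemLp Prod.snd 2 π := (memLp_two_iff_integrable_sq
    measurable_snd.aestronglyMeasurable).2 (h₂.comp_measurable measurable_snd)
  exact hx.integrable_mul hy

lemma integral_sub_sq {π : Measure (ℝ × ℝ)}
    (h₁ : Integrable (fun x => x ^ 2) (π.map Prod.fst))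
    (h₂ : Integrable (fun x => x ^ 2) (π.map Prod.snd)) :
    ∫ z, (z.1 - z.2) ^ 2 ∂π =
      ∫ x, x ^ 2 ∂π.map Prod.fst + ∫ x, x ^ 2 ∂π.map Prod.snd - 2 * ∫ z, z.1 * z.2 ∂π := by
  have hx : Integrable (fun z : ℝ × ℝ => z.1 ^ 2) π := h₁.comp_measurable measurable_fst
  have hy : Integrable (fun z : ℝ × ℝ => z.2 ^ 2) π := h₂.comp_measurable measurable_snd
  have hsum : Integrable (fun z : ℝ × ℝ => z.1 ^ 2 + z.2 ^ 2) π := hx.add hy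
  have hexpand : (fun z : ℝ × ℝ => (z.1 - z.2) ^ 2) =
      fun z => z.1 ^ 2 + z.2 ^ 2 - 2 * (z.1 * z.2) := by
    funext z
    ring
  rw [hexpand, integral_sub hsum ((integrable_fst_mul_snd h₁ h₂).const_mul 2), integral_add hx hy,
    integral_const_mul, integral_map measurable_fst.aemeasurable (by fun_prop),
    integral_map measurable_snd.aemeasurable (by fun_prop)]

lemma measure_Ioi_prod_Ioi_le_min (π : Measure (ℝ × ℝ)) (s t : ℝ) :
    π (Ioi s ×ˢ Ioi t) ≤ min (π.map Prod.fst (Ioi s)) (π.map Prod.snd (Ioi t)) := by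
  rw [Measure.map_apply measurable_fst measurableSet_Ioi,
    Measure.map_apply measurable_snd measurableSet_Ioi]
  exact le_min (measure_mono fun z hz => hz.1) (measure_mono fun z hz => hz.2)

variable (μ ν : Measure ℝ)

lemma map_fst_comonotoneCoupling [IsProbabilityMeasure μ] :
    (comonotoneCoupling μ ν).map Prod.fst = μ := by
  rw [comonotoneCoupling, AEMeasurable.map_map_of_aemeasurable measurable_fst.aemeasurable
    ((aemeasurable_quantile μ).prodMk (aemeasurable_quantile ν))]
  exact map_quantile μ

lemma map_snd_comonotoneCoupling [IsProbabilityMeasure ν] :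
    (comonotoneCoupling μ ν).map Prod.snd = ν := by
  rw [comonotoneCoupling, AEMeasurable.map_map_of_aemeasurable measurable_snd.aemeasurable
    ((aemeasurable_quantile μ).prodMk (aemeasurable_quantile ν))]
  exact map_quantile ν

lemma measure_Ioi_eq_ofReal_one_sub_cdf [IsProbabilityMeasure μ] (x : ℝ) :
    μ (Ioi x) = ENNReal.ofReal (1 - cdf μ x) := by
  rw [← compl_Iic, prob_compl_eq_one_sub measurableSet_Iic, ← ofReal_cdf,
    ENNReal.ofReal_sub _ (cdf_nonneg μ x), ENNReal.ofReal_one]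

lemma min_measure_Ioi_le_comonotoneCoupling [IsProbabilityMeasure μ] [IsProbabilityMeasure ν]
    (s t : ℝ) : min (μ (Ioi s)) (ν (Ioi t)) ≤ comonotoneCoupling μ ν (Ioi s ×ˢ Ioi t) := by
  set c := max (cdf μ s) (cdf ν t)
  rw [measure_Ioi_eq_ofReal_one_sub_cdf, measure_Ioi_eq_ofReal_one_sub_cdf, ← ENNReal.ofReal_min,
    min_sub_sub_left, comonotoneCoupling, Measure.map_apply_of_aemeasurable
      ((aemeasurable_quantile μ).prodMk (aemeasurable_quantile ν))
      (measurableSet_Ioi.prod measurableSet_Ioi),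
    Measure.restrict_apply' measurableSet_Ioo]
  calc ENNReal.ofReal (1 - c) = volume (Ioo c 1) := by rw [Real.volume_Ioo]
    _ ≤ _ := by
      refine measure_mono fun u ⟨hcu, hu1⟩ => ?_
      have hu : u ∈ Ioo 0 1 := ⟨(cdf_nonneg μ s).trans_lt ((le_max_left _ _).trans_lt hcu), hu1⟩
      exact ⟨⟨lt_quantile_of_cdf_lt μ hu1 ((le_max_left _ _).trans_lt hcu),
        lt_quantile_of_cdf_lt ν hu1 ((le_max_right _ _).trans_lt hcu)⟩, hu⟩

variable {μ ν} in
lemma integral_sub_sq_comonotoneCoupling_le [IsProbabilityMeasure μ] [IsProbabilityMeasure ν]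
    (hμ : Integrable (fun x => x ^ 2) μ) (hν : Integrable (fun x => x ^ 2) ν)
    {π : Measure (ℝ × ℝ)} (hfst : π.map Prod.fst = μ) (hsnd : π.map Prod.snd = ν) :
    ∫ z, (z.1 - z.2) ^ 2 ∂comonotoneCoupling μ ν ≤ ∫ z, (z.1 - z.2) ^ 2 ∂π := by
  set π₀ := comonotoneCoupling μ ν
  have h₀fst : π₀.map Prod.fst = μ := map_fst_comonotoneCoupling μ ν
  have h₀snd : π₀.map Prod.snd = ν := map_snd_comonotoneCoupling μ ν
  have hμ₀ : Integrable (fun x => x ^ 2) (π₀.map Prod.fst) := by rwa [h₀fst]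
  have hν₀ : Integrable (fun x => x ^ 2) (π₀.map Prod.snd) := by rwa [h₀snd]
  have hμπ : Integrable (fun x => x ^ 2) (π.map Prod.fst) := by rwa [hfst]
  have hνπ : Integrable (fun x => x ^ 2) (π.map Prod.snd) := by rwa [hsnd]
  have : IsProbabilityMeasure (π.map Prod.fst) := by rw [hfst]; infer_instance
  have : IsProbabilityMeasure (π₀.map Prod.fst) := by rw [h₀fst]; infer_instance
  have : IsProbabilityMeasure π := Measure.isProbabilityMeasure_of_map Prod.fst
  have : IsProbabilityMeasure π₀ := Measure.isProbabilityMeasure_of_map Prod.fst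
  have hmul := integral_mul_le_of_measure_Ioi_prod_le (hfst.trans h₀fst.symm)
    (hsnd.trans h₀snd.symm) (integrable_fst_mul_snd hμπ hνπ) (integrable_fst_mul_snd hμ₀ hν₀)
    fun s t => (measure_Ioi_prod_Ioi_le_min π s t).trans <| by
      rw [hfst, hsnd]
      exact min_measure_Ioi_le_comonotoneCoupling μ ν s t
  rw [integral_sub_sq hμπ hνπ, integral_sub_sq hμ₀ hν₀, hfst, hsnd, h₀fst, h₀snd]
  linarith

theorem w2sq_eq_integral_quantile [IsProbabilityMeasure μ] [IsProbabilityMeasure ν]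
    (hμ : Integrable (fun x => x ^ 2) μ) (hν : Integrable (fun x => x ^ 2) ν) :
    w2sq μ ν = ∫ u in Ioo 0 1, (quantile μ u - quantile ν u) ^ 2 := by
  have hcost : ∫ z, (z.1 - z.2) ^ 2 ∂comonotoneCoupling μ ν =
      ∫ u in Ioo 0 1, (quantile μ u - quantile ν u) ^ 2 :=
    integral_map ((aemeasurable_quantile μ).prodMk (aemeasurable_quantile ν)) (by fun_prop)
  rw [w2sq, ← hcost]
  refine IsLeast.csInf_eq ⟨⟨_, map_fst_comonotoneCoupling μ ν, map_snd_comonotoneCoupling μ ν,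
    rfl⟩, ?_⟩
  rintro _ ⟨π, hfst, hsnd, rfl⟩
  exact integral_sub_sq_comonotoneCoupling_le hμ hν hfst hsnd

end Wasserstein

/-- Isometry property of the CDT:
`d_{W²}²(p, q) = ∫ |C(p)(x) − C(q)(x)|² s₀(x) dx`. -/
theorem cdt_isometry (p q s₀ : ℝ → ℝ)
    (hp : Integrable p) (hp0 : ∀ x, 0 ≤ p x) (hp1 : ∫ x, p x = 1)
    (hq : Integrable q) (hq0 : ∀ x, 0 ≤ q x) (hq1 : ∫ x, q x = 1)
    (hr : Integrable s₀) (hr0 : ∀ x, 0 ≤ s₀ x) (hr1 : ∫ x, s₀ x = 1)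
    (hp2 : Integrable (fun x => x ^ 2 * p x))
    (hq2 : Integrable (fun x => x ^ 2 * q x)) :
    w2sq (densMeasure p) (densMeasure q) =
      ∫ x, |cdt s₀ p x - cdt s₀ q x| ^ 2 * s₀ x := by
  have := isProbabilityMeasure_densMeasure hp hp0 hp1
  have := isProbabilityMeasure_densMeasure hq hq0 hq1
  have := isProbabilityMeasure_densMeasure hr hr0 hr1
  set μ := densMeasure p
  set ν := densMeasure q
  have hcont : Continuous (cdf (densMeasure s₀)) := cum_eq_cdf hr hr0 hr1 ▸ continuous_cum hr
  calc w2sq μ ν = ∫ u in Ioo 0 1, (quantile μ u - quantile ν u) ^ 2 :=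
        w2sq_eq_integral_quantile μ ν ((integrable_densMeasure_iff hp.aemeasurable hp0).2 hp2)
          ((integrable_densMeasure_iff hq.aemeasurable hq0).2 hq2)
    _ = ∫ x, (quantile μ (cdf (densMeasure s₀) x) - quantile ν (cdf (densMeasure s₀) x)) ^ 2
          ∂densMeasure s₀ :=
        (integral_comp_cdf _ hcont
          (((aemeasurable_quantile μ).sub (aemeasurable_quantile ν)).pow_const 2
            |>.aestronglyMeasurable)).symm
    _ = ∫ x, |cdt s₀ p x - cdt s₀ q x| ^ 2 * s₀ x := by
        rw [integral_densMeasure hr.aemeasurable hr0]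
        simp only [cdt, quantile, sq_abs, μ, ν, cum_eq_cdf hp hp0 hp1, cum_eq_cdf hq hq0 hq1,
          cum_eq_cdf hr hr0 hr1]
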